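/- If w is an infinite square-free word over {0,1,2}, and w̄ is the word over {0,1,2,3} obtained from w by inserting the letter 3 between the two letters of every occurrence of the factors 02 and 20, then w̄ is an infinite Dean word (square-free and reduced). -/

import Mathlib

def SqFree {α : Type*} (w : List α) : Prop :=
  ∀ v : List α, v ≠ [] → ¬ (v ++ v) <:+: w

def Reduced (w : List (Fin 4)) : Prop :=
  ∀ p ∈ ([[0,2],[2,0],[1,3],[3,1]] : List (List (Fin 4))), ¬ p <:+: w

def DeanWord (w : List (Fin 4)) : Prop := Reduced w ∧ SqFree w

def IFactor {α : Type*} (v : List α) (w : ℕ → α) : Prop :=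
  ∃ i, v = (List.range v.length).map fun k => w (i + k)

def ISqFree {α : Type*} (w : ℕ → α) : Prop :=
  ∀ v : List α, v ≠ [] → ¬ IFactor (v ++ v) w

def IReduced (w : ℕ → Fin 4) : Prop :=
  ∀ p ∈ ([[0,2],[2,0],[1,3],[3,1]] : List (List (Fin 4))), ¬ IFactor p w

def IDean (w : ℕ → Fin 4) : Prop := IReduced w ∧ ISqFree w

def emb : Fin 3 → Fin 4 := Fin.castLE (by norm_num)

/-- Insertion of the letter `3` in the middle of every occurrence of `02` or `20`. -/
def barL : List (Fin 3) → List (Fin 4)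
  | [] => []
  | [a] => [emb a]
  | a :: b :: t =>
      if (a = 0 ∧ b = 2) ∨ (a = 2 ∧ b = 0) then emb a :: 3 :: barL (b :: t)
      else emb a :: barL (b :: t)

/-- The infinite word obtained by applying the insertion operation to an infinite word:
`barL` applied to the first `2*m+2` letters has length `> m`, so letter `m` is determined. -/
def bar (w : ℕ → Fin 3) : ℕ → Fin 4 :=
  fun m => (barL ((List.range (2 * m + 2)).map w)).getD m 0

/-!
Inserting `3` creates no forbidden factor: a `3` is only ever put between a `0` and a `2`, so
its neighbours lie in `{0, 2}` (no `13`, `31`, `33`), and the factors `02`, `20` are exactly the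
ones it separates. Erasing the `3`s gives back the original word, so a square `vv` in `w̄` either
erases to a square in `w`, or `v` consists of `3`s only and `w̄` contains `33`. The infinite
word is handled through its finite prefixes, on which `bar w` agrees with `barL`.
-/

open List

section Words

variable {α β : Type*}

theorem SqFree.map {f : α → β} (hf : Function.Injective f) {l : List α} (hl : SqFree l) :
    SqFree (l.map f) := by
  intro v hv hvv
  obtain ⟨u, hu, hmap⟩ := infix_map_iff.1 hvv
  obtain ⟨u₁, u₂, rfl, h₁, h₂⟩ := map_eq_append_iff.1 hmap.symm
  have hu₁₂ : u₁ = u₂ := (map_injective_iff.2 hf) (h₁.trans h₂.symm)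
  subst hu₁₂ h₁
  exact hl u₁ (by simpa using hv) hu

theorem pair_infix_append_self {v : List α} {c : α} (hv : v ≠ []) (hc : ∀ x ∈ v, x = c) :
    [c, c] <:+: v ++ v := by
  have hlast := dropLast_append_getLast hv
  have hhead := cons_head_tail hv
  rw [hc _ (getLast_mem hv)] at hlast
  rw [hc _ (head_mem hv)] at hhead
  refine ⟨v.dropLast, v.tail, ?_⟩
  calc v.dropLast ++ [c, c] ++ v.tail = (v.dropLast ++ [c]) ++ (c :: v.tail) := by simp
    _ = v ++ v := by rw [hlast, hhead]

theorem sqFree_of_sqFree_filter_ne [DecidableEq α] {l : List α} (c : α)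
    (hl : SqFree (l.filter (· ≠ c))) (hcc : ¬ [c, c] <:+: l) : SqFree l := by
  intro v hv hvv
  have hfilter : v.filter (· ≠ c) = [] := by
    by_contra hne
    exact hl _ hne (by simpa only [filter_append] using hvv.filter (· ≠ c))
  have hc : ∀ x ∈ v, x = c := by simpa using filter_eq_nil_iff.1 hfilter
  exact hcc ((pair_infix_append_self hv hc).trans hvv)

theorem iFactor_iff_exists_infix {w : ℕ → α} {v : List α} :
    IFactor v w ↔ ∃ n, v <:+: (range n).map w := by
  constructor
  · rintro ⟨i, hv⟩
    generalize v.length = L at hv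
    subst hv
    exact ⟨i + L, (range i).map w, [], by rw [range_add, map_append, map_map, append_nil]; rfl⟩
  · rintro ⟨n, s, t, hst⟩
    refine ⟨s.length, ?_⟩
    have hn : n = s.length + v.length + t.length := by
      have := congrArg length hst
      simp only [length_append, length_map, length_range] at this
      omega
    rw [hn, range_add, range_add, map_append, map_append, map_map] at hst
    have hsv := (append_inj hst (by simp)).1
    exact (append_inj hsv (by simp)).2

theorem ISqFree.sqFree_map_range {w : ℕ → α} (hw : ISqFree w) (n : ℕ) :
    SqFree ((range n).map w) :=
  fun v hv hvv => hw v hv (iFactor_iff_exists_infix.2 ⟨n, hvv⟩)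

end Words

def BarAdj (x y : Fin 4) : Prop :=
  [x, y] ∉ ([[0, 2], [2, 0], [1, 3], [3, 1], [3, 3]] : List (List (Fin 4)))

instance : DecidableRel BarAdj := fun _ _ => inferInstanceAs (Decidable (_ ∉ _))

theorem emb_ne_three : ∀ a : Fin 3, emb a ≠ 3 := by decide

theorem barAdj_emb_three : ∀ a : Fin 3, (a = 0 ∨ a = 2) → BarAdj (emb a) 3 := by decide

theorem barAdj_three_emb : ∀ a : Fin 3, (a = 0 ∨ a = 2) → BarAdj 3 (emb a) := by decide

theorem barAdj_emb_emb :
    ∀ a b : Fin 3, ¬ (a = 0 ∧ b = 2 ∨ a = 2 ∧ b = 0) → BarAdj (emb a) (emb b) := by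
  decide

theorem head?_barL_cons (a : Fin 3) (t : List (Fin 3)) :
    (barL (a :: t)).head? = some (emb a) := by
  cases t with
  | nil => rfl
  | cons b t => rw [barL.eq_3]; split_ifs <;> rfl

theorem isChain_barL (l : List (Fin 3)) : (barL l).IsChain BarAdj := by
  fun_induction barL l with
  | case1 => exact isChain_nil
  | case2 a => exact isChain_singleton _
  | case3 a b t hab ih =>
    refine isChain_cons_cons.2 ⟨barAdj_emb_three a (by tauto), isChain_cons.2 ⟨?_, ih⟩⟩
    simpa [head?_barL_cons] using barAdj_three_emb b (by tauto)
  | case4 a b t hab ih =>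
    refine isChain_cons.2 ⟨?_, ih⟩
    simpa [head?_barL_cons] using barAdj_emb_emb a b hab

theorem filter_barL (l : List (Fin 3)) : (barL l).filter (· ≠ 3) = l.map emb := by
  fun_induction barL l <;> simp_all [emb_ne_three]

theorem reduced_barL (l : List (Fin 3)) : Reduced (barL l) := by
  intro p hp hpl
  have hadj := (isChain_barL l).infix hpl
  simp only [mem_cons, not_mem_nil, or_false] at hp
  rcases hp with rfl | rfl | rfl | rfl <;> exact isChain_pair.1 hadj (by decide)

theorem sqFree_barL {l : List (Fin 3)} (hl : SqFree l) : SqFree (barL l) := by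
  refine sqFree_of_sqFree_filter_ne 3 ?_ fun h33 => ?_
  · rw [filter_barL]
    exact hl.map (Fin.castLE_injective _)
  · exact isChain_pair.1 ((isChain_barL l).infix h33) (by decide)

theorem length_le_length_barL (l : List (Fin 3)) : l.length ≤ (barL l).length := by
  fun_induction barL l <;> grind

theorem barL_prefix_barL_append (l l' : List (Fin 3)) : barL l <+: barL (l ++ l') := by
  fun_induction barL l with
  | case1 => exact nil_prefix
  | case2 a =>
    cases l' with
    | nil => exact prefix_rfl
    | cons b t => rw [singleton_append, barL.eq_3]; split_ifs <;> exact ⟨_, rfl⟩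
  | case3 a b t hab ih => simpa [barL.eq_3, hab] using ih
  | case4 a b t hab ih => simpa [barL.eq_3, hab] using ih

theorem getD_barL_map_range_add (w : ℕ → Fin 3) {m k : ℕ} (hm : m < k) (j : ℕ) :
    (barL ((range (k + j)).map w)).getD m 0 = (barL ((range k).map w)).getD m 0 := by
  have hpre : barL ((range k).map w) <+: barL ((range (k + j)).map w) := by
    rw [range_add, map_append]
    exact barL_prefix_barL_append _ _
  have hlen : m < (barL ((range k).map w)).length := by
    have := length_le_length_barL ((range k).map w)
    rw [length_map, length_range] at this
    omega
  rw [getD_eq_getElem _ _ hlen, getD_eq_getElem _ _ (hlen.trans_le hpre.length_le),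
    hpre.getElem hlen]

theorem bar_eq_getD (w : ℕ → Fin 3) {m n : ℕ} (hmn : m < n) :
    bar w m = (barL ((range n).map w)).getD m 0 :=
  calc bar w m = (barL ((range (2 * m + 2)).map w)).getD m 0 := rfl
    _ = (barL ((range (2 * m + 2 + n)).map w)).getD m 0 :=
      (getD_barL_map_range_add w (by omega) n).symm
    _ = (barL ((range n).map w)).getD m 0 := by
      rw [add_comm]
      exact getD_barL_map_range_add w hmn _

theorem map_range_bar_prefix (w : ℕ → Fin 3) (n : ℕ) :
    (range n).map (bar w) <+: barL ((range n).map w) := by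
  have hlen := length_le_length_barL ((range n).map w)
  rw [length_map, length_range] at hlen
  rw [prefix_iff_eq_take]
  refine ext_getElem (by simpa using hlen) fun m h₁ _ => ?_
  rw [length_map, length_range] at h₁
  rw [getElem_map, getElem_range, getElem_take, bar_eq_getD w h₁, getD_eq_getElem]

theorem IFactor.exists_infix_barL {w : ℕ → Fin 3} {v : List (Fin 4)} (hv : IFactor v (bar w)) :
    ∃ n, v <:+: barL ((range n).map w) :=
  let ⟨n, hn⟩ := iFactor_iff_exists_infix.1 hv
  ⟨n, hn.trans (map_range_bar_prefix w n).isInfix⟩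

theorem stmt3 (w : ℕ → Fin 3) (hw : ISqFree w) : IDean (bar w) := by
  refine ⟨fun p hp hpw => ?_, fun v hv hvv => ?_⟩
  · obtain ⟨n, hn⟩ := hpw.exists_infix_barL
    exact reduced_barL _ p hp hn
  · obtain ⟨n, hn⟩ := hvv.exists_infix_barL
    exact sqFree_barL (hw.sqFree_map_range n) v hv hn
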